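/- The function f_2(z) = ∫_0^z exp(∫_0^y (e^{t^3} − 1)/t dt) dy = z + z^4/12 + 5z^7/252 + ⋯ belongs to the class C_e, has Taylor coefficients a_2 = a_3 = a_5 = 0 and a_4 = 1/12, and satisfies |H_{3,1}(f_2)| = |2 a_2 a_3 a_4 − a_3^3 − a_4^2 − a_2^2 a_5 + a_3 a_5| = 1/144; hence the bound |H_{3,1}(f)| ≤ 1/144 on C_e is sharp. -/

import Mathlib

/-!
With the entire function `p z = (e^{z³} - 1) / z` (`expCubeSlope`) and its primitive `h` vanishing
at `0` (`expCubeSlopeIntegral`), `f₂` is the primitive of `e^h` vanishing at `0`, because entire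
functions have primitives and `∫₀¹ z g(uz) du = G z - G 0` for any primitive `G` of `g`. Hence
`f₂'' = p f₂'`, so `1 + z f₂''/f₂' = e^{z³}` and `f₂ ∈ C_e` with Schwarz function `w z = z³`.

Since `(ωz)³ = z³` for a cube root of unity `ω`, `f₂ (ωz) = ω f₂ z`, which forces `a_n = 0` unless
`n ≡ 1 mod 3`. Differentiating `z f₂'' = (e^{z³} - 1) f₂'` three times at `0`, every term but one
vanishes and `3 f₂⁗(0) = (e^{z³})‴(0) f₂'(0) = 6`, so `a₄ = 1/12` and `H₃,₁(f₂) = -a₄² = -1/144`.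
-/

open Complex Metric

/-- `f` (with Taylor coefficients `a`) belongs to the class `C_e` of convex functions
associated with the exponential function: `f` is analytic on the unit disk,
`f(z) = z + Σ_{n ≥ 2} a_n z^n`, and there is a Schwarz function `w` with
`1 + z f''(z)/f'(z) = exp (w z)` on the disk. -/
def InCe (f : ℂ → ℂ) (a : ℕ → ℂ) : Prop :=
  AnalyticOnNhd ℂ f (ball (0 : ℂ) 1) ∧ a 0 = 0 ∧ a 1 = 1 ∧
    (∀ z ∈ ball (0 : ℂ) 1, HasSum (fun n => a n * z ^ n) (f z)) ∧
    ∃ w : ℂ → ℂ, AnalyticOnNhd ℂ w (ball (0 : ℂ) 1) ∧ w 0 = 0 ∧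
      (∀ z ∈ ball (0 : ℂ) 1, ‖w z‖ ≤ ‖z‖) ∧
      ∀ z ∈ ball (0 : ℂ) 1, 1 + z * deriv (deriv f) z / deriv f z = Complex.exp (w z)

/-- The extremal function `f₂(z) = ∫_0^z exp (∫_0^y (e^{t³} − 1)/t dt) dy`, with both
integrals along segments parametrized linearly: the inner integral from `0` to `y` is
`∫_0^1 (e^{s³y³} − 1)/s ds` (substituting `t = s·y`), and the outer integral from `0` to `z`
is `∫_0^1 z · (integrand at u·z) du` (substituting `y = u·z`). -/
noncomputable def f₂ (z : ℂ) : ℂ :=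
  ∫ u in (0:ℝ)..1,
    z * Complex.exp
      (∫ s in (0:ℝ)..1, (Complex.exp ((s : ℂ) ^ 3 * ((u : ℂ) * z) ^ 3) - 1) / (s : ℂ))

open scoped Nat

section IteratedDeriv

variable {𝕜 : Type*} [NontriviallyNormedField 𝕜]

theorem iteratedDeriv_eq_zero_of_comp_mul_eq_pow_mul {f : 𝕜 → 𝕜} {c : 𝕜} {m n : ℕ}
    (hf : ContDiff 𝕜 n f) (hc : c ^ n ≠ c ^ m) (h : ∀ z, f (c * z) = c ^ m * f z) :
    iteratedDeriv n f 0 = 0 := by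
  have key := congrFun (iteratedDeriv_comp_const_mul hf c) 0
  simp only [h, mul_zero, iteratedDeriv_const_mul_field] at key
  exact (mul_eq_mul_right_iff.mp key).resolve_left hc.symm

theorem iteratedDeriv_succ_id_mul_zero {f : 𝕜 → 𝕜} {n : ℕ} (hf : ContDiffAt 𝕜 (n + 1) f 0) :
    iteratedDeriv (n + 1) (fun z => z * f z) 0 = (n + 1) * iteratedDeriv n f 0 := by
  rw [iteratedDeriv_fun_mul (f := fun z => z) contDiffAt_id hf, Finset.sum_eq_single 1]
  · simp [iteratedDeriv_fun_id_zero]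
  · intro i _ hi
    simp [iteratedDeriv_fun_id_zero, hi]
  · simp

end IteratedDeriv

theorem integral_mul_comp_mul_eq_sub {f F : ℂ → ℂ} (hF : ∀ z, HasDerivAt F (f z) z)
    (hf : Continuous f) (z : ℂ) :
    ∫ u in (0:ℝ)..1, z * f (u * z) = F z - F 0 := by
  have hderiv (u : ℝ) : HasDerivAt (fun u : ℝ => F (u * z)) (z * f (u * z)) u := by
    simpa [mul_comm] using ((hF _).comp (u : ℂ) ((hasDerivAt_id _).mul_const z)).comp_ofReal
  have hcont : Continuous fun u : ℝ => z * f (u * z) := by fun_prop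
  rw [intervalIntegral.integral_eq_sub_of_hasDerivAt (fun u _ => hderiv u)
    (hcont.intervalIntegrable 0 1)]
  simp

theorem Differentiable.hasDerivAt_integral_mul_comp_mul {f : ℂ → ℂ} (hf : Differentiable ℂ f)
    (z : ℂ) : HasDerivAt (fun z => ∫ u in (0:ℝ)..1, z * f (u * z)) (f z) z := by
  obtain ⟨F, hF⟩ := hf.isExactOn_univ
  have hF' (z : ℂ) : HasDerivAt F (f z) z := hF z (Set.mem_univ z)
  simp_rw [integral_mul_comp_mul_eq_sub hF' hf.continuous]
  exact (hF' z).sub_const _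

noncomputable def expCubeSlope : ℂ → ℂ := dslope (fun z => exp (z ^ 3)) 0

theorem differentiable_expCubeSlope : Differentiable ℂ expCubeSlope := by
  rw [← differentiableOn_univ, expCubeSlope, differentiableOn_dslope Filter.univ_mem]
  fun_prop

theorem mul_expCubeSlope (z : ℂ) : z * expCubeSlope z = exp (z ^ 3) - 1 := by
  have h := sub_smul_dslope (fun z : ℂ => exp (z ^ 3)) 0 z
  norm_num at h
  exact h

theorem expCubeSlope_zero : expCubeSlope 0 = 0 := by
  rw [expCubeSlope, dslope_same, ((hasDerivAt_pow 3 (0 : ℂ)).cexp).deriv]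
  simp

noncomputable def expCubeSlopeIntegral (y : ℂ) : ℂ :=
  ∫ s in (0:ℝ)..1, (exp ((s : ℂ) ^ 3 * y ^ 3) - 1) / (s : ℂ)

theorem expCubeSlopeIntegral_eq (y : ℂ) :
    expCubeSlopeIntegral y = ∫ s in (0:ℝ)..1, y * expCubeSlope (s * y) := by
  refine intervalIntegral.integral_congr fun s _ => ?_
  rcases eq_or_ne (s : ℂ) 0 with hs | hs
  · simp [hs, expCubeSlope_zero]
  · rw [div_eq_iff hs, ← mul_pow, ← mul_expCubeSlope]
    ring

theorem hasDerivAt_expCubeSlopeIntegral (y : ℂ) :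
    HasDerivAt expCubeSlopeIntegral (expCubeSlope y) y := by
  rw [funext expCubeSlopeIntegral_eq]
  exact differentiable_expCubeSlope.hasDerivAt_integral_mul_comp_mul y

theorem differentiable_expCubeSlopeIntegral : Differentiable ℂ expCubeSlopeIntegral :=
  fun y => (hasDerivAt_expCubeSlopeIntegral y).differentiableAt

theorem expCubeSlopeIntegral_zero : expCubeSlopeIntegral 0 = 0 := by
  simp [expCubeSlopeIntegral]

theorem hasDerivAt_f₂ (z : ℂ) : HasDerivAt f₂ (exp (expCubeSlopeIntegral z)) z :=
  differentiable_expCubeSlopeIntegral.cexp.hasDerivAt_integral_mul_comp_mul z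

theorem differentiable_f₂ : Differentiable ℂ f₂ := fun z => (hasDerivAt_f₂ z).differentiableAt

theorem deriv_f₂ : deriv f₂ = fun z => exp (expCubeSlopeIntegral z) :=
  funext fun z => (hasDerivAt_f₂ z).deriv

theorem deriv_deriv_f₂ :
    deriv (deriv f₂) = fun z => exp (expCubeSlopeIntegral z) * expCubeSlope z := by
  rw [deriv_f₂]
  exact funext fun z => (hasDerivAt_expCubeSlopeIntegral z).cexp.deriv

theorem mul_deriv_deriv_f₂ (z : ℂ) :
    z * deriv (deriv f₂) z = (exp (z ^ 3) - 1) * deriv f₂ z := by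
  rw [deriv_deriv_f₂, deriv_f₂, ← mul_expCubeSlope]
  ring

theorem f₂_mul_of_pow_three_eq_one {c : ℂ} (hc : c ^ 3 = 1) (z : ℂ) : f₂ (c * z) = c * f₂ z := by
  have hcube (u : ℂ) : (u * (c * z)) ^ 3 = (u * z) ^ 3 := by
    rw [mul_left_comm, mul_pow, hc, one_mul]
  simp only [f₂, hcube, mul_assoc, intervalIntegral.integral_const_mul]

theorem deriv_f₂_zero : deriv f₂ 0 = 1 := by
  simp [deriv_f₂, expCubeSlopeIntegral_zero]

theorem iteratedDeriv_f₂_zero_eq_zero {n : ℕ} (hn : n % 3 ≠ 1) : iteratedDeriv n f₂ 0 = 0 := by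
  set ω : ℂ := exp (2 * Real.pi * I / 3)
  have hω : IsPrimitiveRoot ω 3 := isPrimitiveRoot_exp 3 (by norm_num)
  refine iteratedDeriv_eq_zero_of_comp_mul_eq_pow_mul (m := 1) differentiable_f₂.contDiff ?_
    (by simpa using f₂_mul_of_pow_three_eq_one hω.pow_eq_one)
  rw [← Nat.mod_add_div n 3, pow_add, pow_mul, hω.pow_eq_one, one_pow, mul_one]
  exact fun h => hn (hω.pow_inj (Nat.mod_lt _ (by norm_num)) (by norm_num) h)

theorem iteratedDeriv_three_exp_cube_zero : iteratedDeriv 3 (fun z : ℂ => exp (z ^ 3)) 0 = 6 := by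
  have hderiv : deriv (fun z : ℂ => exp (z ^ 3)) = fun z => 3 * z ^ 2 * exp (z ^ 3) :=
    funext fun z => by simp [mul_comm]
  rw [iteratedDeriv_succ', hderiv, iteratedDeriv_fun_mul (by fun_prop) (by fun_prop)]
  simp [Finset.sum_range_succ, iteratedDeriv_const_mul_field]
  norm_num

theorem iteratedDeriv_four_f₂_zero : iteratedDeriv 4 f₂ 0 = 2 := by
  have hf₂' : Differentiable ℂ (deriv f₂) := by
    rw [deriv_f₂]; exact differentiable_expCubeSlopeIntegral.cexp
  have key := congrArg (fun F => iteratedDeriv 3 F 0) (funext mul_deriv_deriv_f₂)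
  rw [iteratedDeriv_succ_id_mul_zero hf₂'.deriv.contDiff.contDiffAt,
    iteratedDeriv_fun_mul (by fun_prop) hf₂'.contDiff.contDiffAt] at key
  simp only [Finset.sum_range_succ, ← iteratedDeriv_succ'] at key
  have hsub : iteratedDeriv 3 (fun z : ℂ => exp (z ^ 3) - 1) 0 = 6 := by
    rw [iteratedDeriv_fun_sub (by fun_prop) (by fun_prop), iteratedDeriv_three_exp_cube_zero]
    simp [iteratedDeriv_const]
  norm_num [hsub, iteratedDeriv_f₂_zero_eq_zero, deriv_f₂_zero] at key
  linear_combination key / 3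

theorem one_add_mul_deriv_deriv_f₂_div (z : ℂ) :
    1 + z * deriv (deriv f₂) z / deriv f₂ z = exp (z ^ 3) := by
  have hne : deriv f₂ z ≠ 0 := by rw [deriv_f₂]; exact exp_ne_zero _
  rw [mul_deriv_deriv_f₂, mul_div_assoc, div_self hne]
  ring

theorem inCe_f₂ : InCe f₂ fun n => iteratedDeriv n f₂ 0 / n ! := by
  refine ⟨differentiable_f₂.differentiableOn.analyticOnNhd isOpen_ball, by simp [f₂],
    by simp [deriv_f₂_zero], fun z _ => ?_, fun z => z ^ 3, fun z _ => by fun_prop, by simp,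
    fun z hz => ?_, fun z _ => one_add_mul_deriv_deriv_f₂_div z⟩
  · simpa [div_eq_inv_mul, mul_comm, mul_left_comm] using
      hasSum_taylorSeries_of_entire differentiable_f₂ 0 z
  · rw [norm_pow]
    exact pow_le_of_le_one (norm_nonneg z) (mem_ball_zero_iff.mp hz).le (by norm_num)

/-- The function `f₂` belongs to `C_e`, has `a₂ = a₃ = a₅ = 0`, `a₄ = 1/12`, and achieves
`|H₃,₁(f₂)| = 1/144`; hence the bound `|H₃,₁(f)| ≤ 1/144` on `C_e` is sharp. -/
theorem Ce_thirdHankelDet_sharp :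
    ∃ a : ℕ → ℂ, InCe f₂ a ∧ a 2 = 0 ∧ a 3 = 0 ∧ a 4 = 1 / 12 ∧ a 5 = 0 ∧
      ‖2 * a 2 * a 3 * a 4 - a 3 ^ 3 - a 4 ^ 2 - a 2 ^ 2 * a 5 + a 3 * a 5‖
        = 1 / 144 := by
  have ha (n : ℕ) (hn : n % 3 ≠ 1) : iteratedDeriv n f₂ 0 / n ! = 0 := by
    rw [iteratedDeriv_f₂_zero_eq_zero hn, zero_div]
  have ha₄ : iteratedDeriv 4 f₂ 0 / (4 ! : ℂ) = 1 / 12 := by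
    rw [iteratedDeriv_four_f₂_zero]; norm_num [Nat.factorial]
  refine ⟨_, inCe_f₂, ha 2 (by norm_num), ha 3 (by norm_num), ha₄, ha 5 (by norm_num), ?_⟩
  rw [ha 2 (by norm_num), ha 3 (by norm_num), ha 5 (by norm_num), ha₄]
  norm_num
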